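/- If (x, X, y, Y₁₂, α) ∈ ℝ² × Sym₂(ℝ) × ℝ² × ℝ × ℝ² satisfies the linear conditions (L) and the PSD condition (P5), then at least one of the PSD conditions (P4a) and (P4b) holds; that is, (P4a) and (P4b) cannot both be violated. -/

import Mathlib

open Matrix

set_option linter.unusedVariables false

/-- Linear conditions (L). -/
def Lcond (x1 x2 X11 X12 X22 y1 y2 Y12 a1 a2 : ℝ) : Prop :=
  X11 ≤ x1 ∧ x1 ≤ y1 ∧ X22 ≤ x2 ∧ x2 ≤ y2 ∧
  max 0 (x1 - a1 + x2 - a2 - Y12) ≤ X12 ∧ X12 ≤ min (x1 - a1) (x2 - a2) ∧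
  0 ≤ a1 ∧ a1 ≤ y1 - Y12 ∧ 0 ≤ a2 ∧ a2 ≤ y2 - Y12 ∧
  max 0 (y1 + y2 - 1) ≤ Y12 ∧ Y12 ≤ min y1 y2

/-- PSD condition (P3). -/
def P3cond (x1 x2 X11 X12 X22 y1 y2 Y12 a1 a2 : ℝ) : Prop :=
  (!![Y12, x1 - a1, x2 - a2;
      x1 - a1, x1 - a1, X12;
      x2 - a2, X12, x2 - a2] : Matrix (Fin 3) (Fin 3) ℝ).PosSemidef

/-- PSD condition (P4a). -/
def P4acond (x1 x2 X11 X12 X22 y1 y2 Y12 a1 a2 : ℝ) : Prop :=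
  (!![y1 - Y12, 0, a1, 0;
      0, Y12, x1 - a1, x2 - a2;
      a1, x1 - a1, X11, X12;
      0, x2 - a2, X12, x2 - a2] : Matrix (Fin 4) (Fin 4) ℝ).PosSemidef

/-- PSD condition (P4b). -/
def P4bcond (x1 x2 X11 X12 X22 y1 y2 Y12 a1 a2 : ℝ) : Prop :=
  (!![y2 - Y12, 0, 0, a2;
      0, Y12, x1 - a1, x2 - a2;
      0, x1 - a1, x1 - a1, X12;
      a2, x2 - a2, X12, X22] : Matrix (Fin 4) (Fin 4) ℝ).PosSemidef

/-- PSD condition (P5). -/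
def P5cond (x1 x2 X11 X12 X22 y1 y2 Y12 a1 a2 : ℝ) : Prop :=
  (!![y1 - Y12, 0, 0, a1, 0;
      0, y2 - Y12, 0, 0, a2;
      0, 0, Y12, x1 - a1, x2 - a2;
      a1, 0, x1 - a1, X11, X12;
      0, a2, x2 - a2, X12, X22] : Matrix (Fin 5) (Fin 5) ℝ).PosSemidef

/-!
Write `β₁ = y₁ - Y₁₂` and `c = X₁₁ - (x₁ - α₁)`. The (P4a) matrix is the (P3) matrix on the
coordinates 2–4 plus the block `[[β₁, α₁], [α₁, c]]` on the coordinates 1, 3, and (P3) follows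
from (L) alone. If that block is not PSD then, as `β₁ ≥ 0`, some `w` has `β₁ w² + 2 α₁ w + c ≤ 0`,
and then the (P4b) form at `v` dominates the (P5) form at `(w v₃, v₁, v₂, v₃, v₄)`.
-/

lemma forall_quadratic_nonneg_or_exists_nonpos {β a c : ℝ} (hβ : 0 ≤ β) :
    (∀ s t : ℝ, 0 ≤ β * s ^ 2 + 2 * a * s * t + c * t ^ 2) ∨
      ∃ w : ℝ, β * w ^ 2 + 2 * a * w + c ≤ 0 := by
  by_contra! h
  obtain ⟨⟨s, t, hst⟩, hpos⟩ := h
  rcases eq_or_ne t 0 with rfl | ht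
  · nlinarith [mul_nonneg hβ (sq_nonneg s)]
  · have hscale : β * s ^ 2 + 2 * a * s * t + c * t ^ 2
        = t ^ 2 * (β * (s / t) ^ 2 + 2 * a * (s / t) + c) := by
      field_simp
    rw [hscale] at hst
    linarith [mul_pos (by positivity : (0 : ℝ) < t ^ 2) (hpos (s / t))]

section Conditions

variable {x1 x2 X11 X12 X22 y1 y2 Y12 a1 a2 : ℝ}

lemma P3cond_of_Lcond (hL : Lcond x1 x2 X11 X12 X22 y1 y2 Y12 a1 a2) :
    P3cond x1 x2 X11 X12 X22 y1 y2 Y12 a1 a2 := by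
  obtain ⟨-, -, -, -, hlo, hhi, -, -, -, -, -, -⟩ := hL
  obtain ⟨hX, hsum⟩ := max_le_iff.mp hlo
  obtain ⟨h1, h2⟩ := le_min_iff.mp hhi
  refine PosSemidef.of_dotProduct_mulVec_nonneg
    (by ext i j; fin_cases i <;> fin_cases j <;> rfl) fun v => ?_
  simp only [dotProduct, mulVec, Fin.sum_univ_three,
    Pi.star_apply, star_trivial, of_apply, cons_val', cons_val_fin_one, cons_val_zero, cons_val_one,
    cons_val]
  -- (P3) is the moment matrix of the masses X₁₂, x₁-α₁-X₁₂, x₂-α₂-X₁₂, Y₁₂+X₁₂-(x₁-α₁)-(x₂-α₂)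
  -- at the points (1,1,1), (1,1,0), (1,0,1), (1,0,0)
  nlinarith [mul_nonneg hX (sq_nonneg (v 0 + v 1 + v 2)),
    mul_nonneg (sub_nonneg.mpr h1) (sq_nonneg (v 0 + v 1)),
    mul_nonneg (sub_nonneg.mpr h2) (sq_nonneg (v 0 + v 2)),
    mul_nonneg (by linarith : 0 ≤ Y12 + X12 - (x1 - a1) - (x2 - a2)) (sq_nonneg (v 0))]

lemma P4acond_of_P3cond (h3 : P3cond x1 x2 X11 X12 X22 y1 y2 Y12 a1 a2)
    (hblock : ∀ s t : ℝ, 0 ≤ (y1 - Y12) * s ^ 2 + 2 * a1 * s * t + (X11 - (x1 - a1)) * t ^ 2) :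
    P4acond x1 x2 X11 X12 X22 y1 y2 Y12 a1 a2 := by
  refine PosSemidef.of_dotProduct_mulVec_nonneg
    (by ext i j; fin_cases i <;> fin_cases j <;> rfl) fun v => ?_
  have hP3 := h3.dotProduct_mulVec_nonneg ![v 1, v 2, v 3]
  have hB := hblock (v 0) (v 2)
  simp only [dotProduct, mulVec, Fin.sum_univ_three, Fin.sum_univ_four,
    Pi.star_apply, star_trivial, of_apply, cons_val', cons_val_fin_one, cons_val_zero, cons_val_one,
    cons_val] at hP3 ⊢
  linarith

lemma P4bcond_of_P5cond (h5 : P5cond x1 x2 X11 X12 X22 y1 y2 Y12 a1 a2) {w : ℝ}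
    (hw : (y1 - Y12) * w ^ 2 + 2 * a1 * w + (X11 - (x1 - a1)) ≤ 0) :
    P4bcond x1 x2 X11 X12 X22 y1 y2 Y12 a1 a2 := by
  refine PosSemidef.of_dotProduct_mulVec_nonneg
    (by ext i j; fin_cases i <;> fin_cases j <;> rfl) fun v => ?_
  have hP5 := h5.dotProduct_mulVec_nonneg ![w * v 2, v 0, v 1, v 2, v 3]
  have hgap := mul_nonneg (neg_nonneg.mpr hw) (sq_nonneg (v 2))
  simp only [dotProduct, mulVec, Fin.sum_univ_four, Fin.sum_univ_five,
    Pi.star_apply, star_trivial, of_apply, cons_val', cons_val_fin_one, cons_val_zero, cons_val_one,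
    cons_val] at hP5 ⊢
  linarith

end Conditions

theorem stmt6 (x1 x2 X11 X12 X22 y1 y2 Y12 a1 a2 : ℝ)
    (hL : Lcond x1 x2 X11 X12 X22 y1 y2 Y12 a1 a2)
    (hP5 : P5cond x1 x2 X11 X12 X22 y1 y2 Y12 a1 a2) :
    P4acond x1 x2 X11 X12 X22 y1 y2 Y12 a1 a2 ∨
      P4bcond x1 x2 X11 X12 X22 y1 y2 Y12 a1 a2 := by
  have hβ : 0 ≤ y1 - Y12 := by
    obtain ⟨-, -, -, -, -, -, ha1, ha1β, -⟩ := hL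
    linarith
  rcases forall_quadratic_nonneg_or_exists_nonpos (a := a1) (c := X11 - (x1 - a1)) hβ with
    hblock | ⟨w, hw⟩
  · exact Or.inl (P4acond_of_P3cond (P3cond_of_Lcond hL) hblock)
  · exact Or.inr (P4bcond_of_P5cond hP5 hw)
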